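/- The book thickness of a finite connected graph equals the maximum of the book thicknesses of its blocks (maximal nonseparable subgraphs). -/

import Mathlib

open SimpleGraph

/-- Two chords `{a,b}` and `{c,d}` (endpoints sorted) interleave on the spine. -/
def Cross {n : ℕ} (a b c d : Fin n) : Prop :=
  (a < c ∧ c < b ∧ b < d) ∨ (c < a ∧ a < d ∧ d < b)

/-- Crossing of chords with arbitrary endpoint order. -/
def Cross' {n : ℕ} (a b c d : Fin n) : Prop :=
  Cross (min a b) (max a b) (min c d) (max c d)

/-- A `k`-page book embedding: the vertices are placed (injectively) on a spine and every
edge gets one of `k` pages so that edges on the same page do not cross. -/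
def HasBookEmbedding {V : Type} (G : SimpleGraph V) (k : ℕ) : Prop :=
  ∃ (n : ℕ) (ord : V ↪ Fin n) (page : Sym2 V → Fin k),
    ∀ a b c d : V, G.Adj a b → G.Adj c d → page s(a, b) = page s(c, d) →
      ¬ Cross' (ord a) (ord b) (ord c) (ord d)

/-- Book thickness (pagenumber). -/
noncomputable def bookThickness {V : Type} (G : SimpleGraph V) : ℕ :=
  sInf {k | HasBookEmbedding G k}

/-- Reversal of darts, as a permutation. -/
def dartReverse {V : Type} (G : SimpleGraph V) : Equiv.Perm G.Dart :=
  ⟨SimpleGraph.Dart.symm, SimpleGraph.Dart.symm,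
    SimpleGraph.Dart.symm_symm, SimpleGraph.Dart.symm_symm⟩

/-- A rotation system: a permutation of darts which fixes sources and is cyclic
on the darts emanating from each vertex. -/
def IsRotation {V : Type} (G : SimpleGraph V) (ρ : Equiv.Perm G.Dart) : Prop :=
  (∀ d : G.Dart, (ρ d).fst = d.fst) ∧
  (∀ d d' : G.Dart, d.fst = d'.fst → ρ.SameCycle d d')

/-- The face-tracing permutation of a rotation system. -/
def facePerm {V : Type} (G : SimpleGraph V) (ρ : Equiv.Perm G.Dart) : Equiv.Perm G.Dart :=
  ρ * dartReverse G

/-- The number of faces of a rotation system: orbits of the face-tracing permutation,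
plus one face for each isolated vertex. -/
noncomputable def numFaces {V : Type} (G : SimpleGraph V) (ρ : Equiv.Perm G.Dart) : ℕ :=
  Nat.card (MulAction.orbitRel.Quotient (Subgroup.zpowers (facePerm G ρ)) G.Dart) +
    Nat.card {v : V | ∀ w, ¬ G.Adj v w}

/-- A rotation system is planar (genus 0) when Euler's formula `V - E + F = 2C` holds. -/
def IsPlanarRotation {V : Type} (G : SimpleGraph V) (ρ : Equiv.Perm G.Dart) : Prop :=
  IsRotation G ρ ∧
    Nat.card V + numFaces G ρ =
      Nat.card G.edgeSet + 2 * Nat.card G.ConnectedComponent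

/-- A graph is planar when it admits a genus-0 rotation system. -/
def IsPlanar {V : Type} (G : SimpleGraph V) : Prop :=
  ∃ ρ : Equiv.Perm G.Dart, IsPlanarRotation G ρ

/-- A graph is subhamiltonian when it is a subgraph of a planar Hamiltonian graph. -/
def IsSubhamiltonian {V : Type} (G : SimpleGraph V) : Prop :=
  ∃ (W : Type) (_ : Fintype W) (_ : DecidableEq W) (H : SimpleGraph W) (f : V ↪ W),
    IsPlanar H ∧ H.IsHamiltonian ∧ ∀ a b : V, G.Adj a b → H.Adj (f a) (f b)

/-- The cone over a graph: a new apex vertex joined to every old vertex. -/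
def cone {V : Type} (G : SimpleGraph V) : SimpleGraph (Option V) :=
  SimpleGraph.fromRel (fun a b =>
    a = none ∨ ∃ u v : V, a = some u ∧ b = some v ∧ G.Adj u v)

/-- A graph is outerplanar iff the cone over it is planar. -/
def IsOuterplanar {V : Type} (G : SimpleGraph V) : Prop :=
  IsPlanar (cone G)

/-- A cutvertex: its deletion disconnects the graph. -/
def IsCutVertex {V : Type} (G : SimpleGraph V) (v : V) : Prop :=
  ¬ ((⊤ : G.Subgraph).deleteVerts {v}).coe.Preconnected

/-- A graph is nonseparable when it is connected and has no cutvertex. -/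
def IsNonseparable {V : Type} (G : SimpleGraph V) : Prop :=
  G.Connected ∧ ∀ v : V, ¬ IsCutVertex G v

/-- A block: a maximal nonseparable subgraph. -/
def SimpleGraph.Subgraph.IsBlock {V : Type} {G : SimpleGraph V} (B : G.Subgraph) : Prop :=
  IsNonseparable B.coe ∧
    ∀ C : G.Subgraph, B ≤ C → IsNonseparable C.coe → C = B

/-- A separating triangle: a triangle whose removal disconnects the graph. -/
def SeparatingTriangle {V : Type} (G : SimpleGraph V) (a b c : V) : Prop :=
  G.Adj a b ∧ G.Adj b c ∧ G.Adj a c ∧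
    ¬ ((⊤ : G.Subgraph).deleteVerts {a, b, c}).coe.Preconnected

/-- A rotation system is a triangulation if every face has exactly three darts. -/
def IsTriangulation {V : Type} (G : SimpleGraph V) (ρ : Equiv.Perm G.Dart) : Prop :=
  ∀ d : G.Dart, facePerm G ρ (facePerm G ρ (facePerm G ρ d)) = d ∧ facePerm G ρ d ≠ d

/-- The triangle `a b c` bounds a face of the embedding `ρ`: the darts of one of its two
orientations form an orbit of the face-tracing permutation. -/
def TriBoundsFace {V : Type} (G : SimpleGraph V) (ρ : Equiv.Perm G.Dart) (a b c : V) : Prop :=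
  ∃ d₁ d₂ d₃ : G.Dart,
    facePerm G ρ d₁ = d₂ ∧ facePerm G ρ d₂ = d₃ ∧ facePerm G ρ d₃ = d₁ ∧
    ((d₁.toProd = (a, b) ∧ d₂.toProd = (b, c) ∧ d₃.toProd = (c, a)) ∨
     (d₁.toProd = (a, c) ∧ d₂.toProd = (c, b) ∧ d₃.toProd = (b, a)))

/-- Nicely planar: some plane embedding in which every triangle bounds a face. -/
def IsNicelyPlanar {V : Type} (G : SimpleGraph V) : Prop :=
  ∃ ρ : Equiv.Perm G.Dart, IsPlanarRotation G ρ ∧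
    ∀ a b c : V, G.Adj a b → G.Adj b c → G.Adj a c → TriBoundsFace G ρ a b c

/-- 3-connected: at least 4 vertices and connected after deleting any two vertices. -/
def IsThreeConnected {V : Type} (G : SimpleGraph V) : Prop :=
  4 ≤ Nat.card V ∧ ∀ a b : V, ((⊤ : G.Subgraph).deleteVerts {a, b}).coe.Connected

/-!
If `(A, B)` is a separation of order at most one of `G` (`A ∪ B` covers the vertices, `A ∩ B`
has at most one vertex, and no edge joins `A \ B` to `B \ A`), then `k`-page book embeddings of
`G[A]` and `G[B]` combine into one of `G`: rotate both cyclic orders so that the shared vertex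
comes first, concatenate them and keep both page assignments; no edge of one side then separates
two vertices of the other. A finite graph without a proper such separation is empty or
nonseparable, so induction on the number of vertices shows that `G` has a `k`-page book
embedding as soon as all its nonseparable subgraphs do. Every nonseparable subgraph lies in a
block, and book thickness is monotone under taking subgraphs.
-/

open Set Function

def CrossNat (a b c d : ℕ) : Prop :=
  (min a b < min c d ∧ min c d < max a b ∧ max a b < max c d) ∨
    (min c d < min a b ∧ min a b < max c d ∧ max c d < max a b)

theorem cross'_iff_crossNat {n : ℕ} (a b c d : Fin n) :
    Cross' a b c d ↔ CrossNat a b c d := by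
  simp only [Cross', Cross, CrossNat, lt_min_iff, min_lt_iff, lt_max_iff, max_lt_iff,
    Fin.lt_def]

theorem crossNat_comm {a b c d : ℕ} : CrossNat a b c d ↔ CrossNat c d a b := by
  unfold CrossNat; omega

theorem crossNat_iff_of_lt_iff {α : Type*} {f g : α → ℕ} (h : ∀ x y, f x < f y ↔ g x < g y)
    (a b c d : α) : CrossNat (f a) (f b) (f c) (f d) ↔ CrossNat (g a) (g b) (g c) (g d) := by
  simp only [CrossNat, lt_min_iff, min_lt_iff, lt_max_iff, max_lt_iff, h]

theorem not_crossNat_of_not_between {a b c d : ℕ} (hc : ¬ (min a b < c ∧ c < max a b))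
    (hd : ¬ (min a b < d ∧ d < max a b)) : ¬ CrossNat a b c d := by
  unfold CrossNat; omega

/-- A rotation of the cyclic order on positions `< N`. -/
def rotatePos (t N x : ℕ) : ℕ := if x < t then x + N else x

theorem crossNat_of_rotatePos {t N a b c d : ℕ} (ha : a < N) (hb : b < N) (hc : c < N)
    (hd : d < N) (h : CrossNat (rotatePos t N a) (rotatePos t N b) (rotatePos t N c)
      (rotatePos t N d)) : CrossNat a b c d := by
  unfold CrossNat rotatePos at *
  split_ifs at h <;> omega

section Layout

variable {V W : Type} {G : SimpleGraph V} {H : SimpleGraph W} {k : ℕ}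

/-- A book embedding with the spine positions taken in `ℕ` rather than in some `Fin n`. -/
structure IsBookLayout (G : SimpleGraph V) (pos : V → ℕ) (page : Sym2 V → Fin k) : Prop where
  injective : Injective pos
  not_crossNat : ∀ ⦃a b c d⦄, G.Adj a b → G.Adj c d → page s(a, b) = page s(c, d) →
    ¬ CrossNat (pos a) (pos b) (pos c) (pos d)

theorem hasBookEmbedding_iff_exists_isBookLayout [Finite V] :
    HasBookEmbedding G k ↔ ∃ (pos : V → ℕ) (page : Sym2 V → Fin k), IsBookLayout G pos page := by
  constructor
  · rintro ⟨n, ord, page, h⟩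
    refine ⟨fun v => ord v, page, fun u w huw => ord.injective (Fin.ext huw), ?_⟩
    intro a b c d hab hcd hp
    simpa only [cross'_iff_crossNat] using h a b c d hab hcd hp
  · rintro ⟨pos, page, hpos, h⟩
    obtain ⟨N, hN⟩ := (finite_range pos).bddAbove
    let ord : V ↪ Fin (N + 1) :=
      ⟨fun v => ⟨pos v, Nat.lt_succ_of_le (hN ⟨v, rfl⟩)⟩,
        fun u w huw => hpos (congrArg Fin.val huw)⟩
    refine ⟨N + 1, ord, page, fun a b c d hab hcd hp => ?_⟩
    rw [cross'_iff_crossNat]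
    exact h hab hcd hp

theorem IsBookLayout.rotate {pos : V → ℕ} {page : Sym2 V → Fin k} (h : IsBookLayout G pos page)
    (t : ℕ) {N : ℕ} (hN : ∀ v, pos v < N) : IsBookLayout G (rotatePos t N ∘ pos) page where
  injective u w huw := h.injective <| by
    have := hN u; have := hN w
    simp only [comp_apply, rotatePos] at huw
    split_ifs at huw <;> omega
  not_crossNat _ _ _ _ hab hcd hp hcross :=
    h.not_crossNat hab hcd hp (crossNat_of_rotatePos (hN _) (hN _) (hN _) (hN _) hcross)

theorem HasBookEmbedding.exists_isBookLayout_le [Finite V] (h : HasBookEmbedding G k)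
    {S : Set V} (hS : S.Subsingleton) :
    ∃ (pos : V → ℕ) (page : Sym2 V → Fin k), IsBookLayout G pos page ∧
      ∀ v ∈ S, ∀ u, pos v ≤ pos u := by
  obtain ⟨pos, page, hl⟩ := hasBookEmbedding_iff_exists_isBookLayout.mp h
  rcases hS.eq_empty_or_singleton with rfl | ⟨v, rfl⟩
  · exact ⟨pos, page, hl, by simp⟩
  obtain ⟨N, hN⟩ := (finite_range pos).bddAbove
  have hN' : ∀ u, pos u < N + 1 := fun u => Nat.lt_succ_of_le (hN ⟨u, rfl⟩)
  refine ⟨_, page, hl.rotate (pos v) hN', ?_⟩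
  simp only [mem_singleton_iff, forall_eq, comp_apply, rotatePos]
  intro u
  have := hN' u; have := hN' v
  split_ifs <;> omega

theorem HasBookEmbedding.mono {k' : ℕ} (h : HasBookEmbedding G k) (hk : k ≤ k') :
    HasBookEmbedding G k' := by
  obtain ⟨n, ord, page, h⟩ := h
  exact ⟨n, ord, Fin.castLE hk ∘ page, fun a b c d hab hcd hp =>
    h a b c d hab hcd (Fin.castLE_injective hk hp)⟩

theorem HasBookEmbedding.of_isContained (h : HasBookEmbedding H k) (hGH : G ⊑ H) :
    HasBookEmbedding G k := by
  obtain ⟨f⟩ := hGH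
  obtain ⟨n, ord, page, h⟩ := h
  refine ⟨n, ⟨fun v => ord (f v), ord.injective.comp f.injective⟩, page ∘ Sym2.map f,
    fun a b c d hab hcd hp => ?_⟩
  exact h _ _ _ _ (f.toHom.map_adj hab) (f.toHom.map_adj hcd) (by simpa using hp)

theorem hasBookEmbedding_of_isEmpty [IsEmpty V] : HasBookEmbedding G k :=
  ⟨0, ⟨isEmptyElim, fun u => isEmptyElim u⟩, isEmptyElim, fun a => isEmptyElim a⟩

theorem exists_hasBookEmbedding [Finite V] : ∃ k, HasBookEmbedding G k := by
  classical
  have := Fintype.ofFinite V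
  refine ⟨Fintype.card (Sym2 V), hasBookEmbedding_iff_exists_isBookLayout.mpr
    ⟨fun v => Fintype.equivFin V v, Fintype.equivFin (Sym2 V),
      fun u w huw => (Fintype.equivFin V).injective (Fin.ext huw), ?_⟩⟩
  intro a b c d _ _ hp
  rcases Sym2.eq_iff.mp ((Fintype.equivFin _).injective hp) with ⟨rfl, rfl⟩ | ⟨rfl, rfl⟩ <;>
    · unfold CrossNat; omega

theorem hasBookEmbedding_bookThickness [Finite V] : HasBookEmbedding G (bookThickness G) :=
  Nat.sInf_mem exists_hasBookEmbedding

theorem hasBookEmbedding_iff_bookThickness_le [Finite V] :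
    HasBookEmbedding G k ↔ bookThickness G ≤ k :=
  ⟨fun h => Nat.sInf_le h, hasBookEmbedding_bookThickness.mono⟩

theorem bookThickness_le_of_isContained [Finite W] (h : G ⊑ H) :
    bookThickness G ≤ bookThickness H :=
  Nat.sInf_le (hasBookEmbedding_bookThickness.of_isContained h)

theorem SimpleGraph.Subgraph.coe_isContained_coe {B C : G.Subgraph} (h : B ≤ C) :
    B.coe ⊑ C.coe :=
  ⟨(Subgraph.inclusion h).toCopy (Subgraph.inclusion.injective h)⟩

end Layout

section Separation

variable {V : Type} {G : SimpleGraph V} {A B : Set V} {k : ℕ}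

structure IsSeparation (G : SimpleGraph V) (A B : Set V) : Prop where
  union_eq_univ : A ∪ B = univ
  inter_subsingleton : (A ∩ B).Subsingleton
  adj : ∀ ⦃x y⦄, G.Adj x y → x ∈ A ∧ y ∈ A ∨ x ∈ B ∧ y ∈ B

namespace IsSeparation

theorem mem_right_of_notMem_left (hAB : IsSeparation G A B) {u : V} (hu : u ∉ A) : u ∈ B :=
  (hAB.union_eq_univ ▸ mem_univ u : u ∈ A ∪ B).resolve_left hu

variable (hAB : IsSeparation G A B) {posA : A → ℕ} {posB : B → ℕ} {M : ℕ}

open Classical in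
noncomputable def gluePos (posA : A → ℕ) (posB : B → ℕ) (M : ℕ) (u : V) : ℕ :=
  if h : u ∈ A then posA ⟨u, h⟩ else M + posB ⟨u, hAB.mem_right_of_notMem_left h⟩

variable (posA posB M) in
theorem gluePos_of_mem {x : V} (hx : x ∈ A) : hAB.gluePos posA posB M x = posA ⟨x, hx⟩ :=
  dif_pos hx

variable (posA posB M) in
theorem gluePos_of_notMem {x : V} (hx : x ∉ A) (hx' : x ∈ B) :
    hAB.gluePos posA posB M x = M + posB ⟨x, hx'⟩ :=
  dif_neg hx

theorem gluePos_injective (hA : Injective posA) (hB : Injective posB) (hM : ∀ u, posA u < M) :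
    Injective (hAB.gluePos posA posB M) := by
  intro u w huw
  by_cases hu : u ∈ A <;> by_cases hw : w ∈ A
  · rw [hAB.gluePos_of_mem posA posB M hu, hAB.gluePos_of_mem posA posB M hw] at huw
    exact congrArg Subtype.val (hA huw)
  · have := hAB.gluePos_of_mem posA posB M hu; have := hM ⟨u, hu⟩
    have := hAB.gluePos_of_notMem posA posB M hw (hAB.mem_right_of_notMem_left hw)
    omega
  · have := hAB.gluePos_of_mem posA posB M hw; have := hM ⟨w, hw⟩
    have := hAB.gluePos_of_notMem posA posB M hu (hAB.mem_right_of_notMem_left hu)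
    omega
  · rw [hAB.gluePos_of_notMem posA posB M hu (hAB.mem_right_of_notMem_left hu),
      hAB.gluePos_of_notMem posA posB M hw (hAB.mem_right_of_notMem_left hw),
      Nat.add_left_cancel_iff] at huw
    exact congrArg Subtype.val (hB huw)

theorem gluePos_lt_gluePos_iff (hB : Injective posB) (hB₀ : ∀ v : B, v.1 ∈ A → ∀ u, posB v ≤ posB u)
    (hM : ∀ u, posA u < M) (u w : B) :
    hAB.gluePos posA posB M u < hAB.gluePos posA posB M w ↔ posB u < posB w := by
  obtain ⟨u, hu⟩ := u
  obtain ⟨w, hw⟩ := w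
  have hne : u ≠ w → posB ⟨u, hu⟩ ≠ posB ⟨w, hw⟩ := fun h h' => h (congrArg Subtype.val (hB h'))
  dsimp only
  by_cases huA : u ∈ A <;> by_cases hwA : w ∈ A
  · obtain rfl : u = w := hAB.inter_subsingleton ⟨huA, hu⟩ ⟨hwA, hw⟩
    simp
  · have := hAB.gluePos_of_mem posA posB M huA; have := hM ⟨u, huA⟩
    have := hAB.gluePos_of_notMem posA posB M hwA hw
    have := hB₀ ⟨u, hu⟩ huA ⟨w, hw⟩; have := hne (fun h => hwA (h ▸ huA))
    omega
  · have := hAB.gluePos_of_mem posA posB M hwA; have := hM ⟨w, hwA⟩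
    have := hAB.gluePos_of_notMem posA posB M huA hu
    have := hB₀ ⟨w, hw⟩ hwA ⟨u, hu⟩; have := hne (fun h => huA (h ▸ hwA))
    omega
  · have := hAB.gluePos_of_notMem posA posB M huA hu
    have := hAB.gluePos_of_notMem posA posB M hwA hw
    omega

/-- Since a shared vertex comes first in `A`, no chord inside `A` separates two vertices of `B`. -/
theorem not_crossNat_gluePos (hA₀ : ∀ v : A, v.1 ∈ B → ∀ u, posA v ≤ posA u)
    (hM : ∀ u, posA u < M) {a b c d : V} (ha : a ∈ A) (hb : b ∈ A) (hc : c ∈ B) (hd : d ∈ B) :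
    ¬ CrossNat (hAB.gluePos posA posB M a) (hAB.gluePos posA posB M b)
      (hAB.gluePos posA posB M c) (hAB.gluePos posA posB M d) := by
  set pos := hAB.gluePos posA posB M
  have hpa : pos a = posA ⟨a, ha⟩ := hAB.gluePos_of_mem posA posB M ha
  have hpb : pos b = posA ⟨b, hb⟩ := hAB.gluePos_of_mem posA posB M hb
  have outside (y : V) (hy : y ∈ B) :
      ¬ (min (pos a) (pos b) < pos y ∧ pos y < max (pos a) (pos b)) := by
    by_cases hyA : y ∈ A
    · have : pos y = posA ⟨y, hyA⟩ := hAB.gluePos_of_mem posA posB M hyA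
      have := hA₀ ⟨y, hyA⟩ hy ⟨a, ha⟩; have := hA₀ ⟨y, hyA⟩ hy ⟨b, hb⟩
      omega
    · have : pos y = M + posB ⟨y, hy⟩ := hAB.gluePos_of_notMem posA posB M hyA hy
      have := hM ⟨a, ha⟩; have := hM ⟨b, hb⟩
      omega
  exact not_crossNat_of_not_between (outside c hc) (outside d hd)

open Classical in
theorem isBookLayout_gluePos {pageA : Sym2 A → Fin k} {pageB : Sym2 B → Fin k}
    (hA : IsBookLayout (G.induce A) posA pageA) (hB : IsBookLayout (G.induce B) posB pageB)
    (hA₀ : ∀ v : A, v.1 ∈ B → ∀ u, posA v ≤ posA u)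
    (hB₀ : ∀ v : B, v.1 ∈ A → ∀ u, posB v ≤ posB u)
    (hM : ∀ u, posA u < M) {r : V → B} (hr : ∀ u : B, r u = u) :
    IsBookLayout G (hAB.gluePos posA posB M)
      (fun e => if h : ∀ x ∈ e, x ∈ A then pageA (e.attachWith h) else pageB (e.map r)) := by
  refine ⟨hAB.gluePos_injective hA.injective hB.injective hM, fun a b c d hab hcd hp => ?_⟩
  by_cases e₁ : a ∈ A ∧ b ∈ A <;> by_cases e₂ : c ∈ A ∧ d ∈ A
  · have h₁ : ∀ x ∈ s(a, b), x ∈ A := by simpa using e₁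
    have h₂ : ∀ x ∈ s(c, d), x ∈ A := by simpa using e₂
    simp only [dif_pos h₁, dif_pos h₂] at hp
    have := hA.not_crossNat (a := ⟨a, e₁.1⟩) (b := ⟨b, e₁.2⟩) (c := ⟨c, e₂.1⟩)
      (d := ⟨d, e₂.2⟩) hab hcd hp
    rwa [← hAB.gluePos_of_mem posA posB M e₁.1, ← hAB.gluePos_of_mem posA posB M e₁.2,
      ← hAB.gluePos_of_mem posA posB M e₂.1, ← hAB.gluePos_of_mem posA posB M e₂.2] at this
  · obtain ⟨hc, hd⟩ := (hAB.adj hcd).resolve_left e₂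
    exact hAB.not_crossNat_gluePos hA₀ hM e₁.1 e₁.2 hc hd
  · obtain ⟨ha, hb⟩ := (hAB.adj hab).resolve_left e₁
    exact fun h => hAB.not_crossNat_gluePos hA₀ hM e₂.1 e₂.2 ha hb (crossNat_comm.mp h)
  · obtain ⟨ha, hb⟩ := (hAB.adj hab).resolve_left e₁
    obtain ⟨hc, hd⟩ := (hAB.adj hcd).resolve_left e₂
    have h₁ : ¬ ∀ x ∈ s(a, b), x ∈ A := by simpa using e₁
    have h₂ : ¬ ∀ x ∈ s(c, d), x ∈ A := by simpa using e₂
    simp only [dif_neg h₁, dif_neg h₂, Sym2.map_mk] at hp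
    rw [show r a = ⟨a, ha⟩ from hr ⟨a, ha⟩, show r b = ⟨b, hb⟩ from hr ⟨b, hb⟩,
      show r c = ⟨c, hc⟩ from hr ⟨c, hc⟩, show r d = ⟨d, hd⟩ from hr ⟨d, hd⟩] at hp
    exact (crossNat_iff_of_lt_iff (hAB.gluePos_lt_gluePos_iff hB.injective hB₀ hM)
      ⟨a, ha⟩ ⟨b, hb⟩ ⟨c, hc⟩ ⟨d, hd⟩).not.mpr (hB.not_crossNat hab hcd hp)

end IsSeparation

theorem IsSeparation.hasBookEmbedding [Finite V] (hAB : IsSeparation G A B)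
    (hA : HasBookEmbedding (G.induce A) k)
    (hB : HasBookEmbedding (G.induce B) k) : HasBookEmbedding G k := by
  rcases B.eq_empty_or_nonempty with rfl | ⟨b, hb⟩
  · obtain rfl : A = univ := by simpa using hAB.union_eq_univ
    exact hA.of_isContained ⟨(induceUnivIso G).symm.toCopy⟩
  obtain ⟨posA, pageA, hlA, hA₀⟩ := hA.exists_isBookLayout_le (S := {v : A | v.1 ∈ B})
    fun x hx y hy => Subtype.ext (hAB.inter_subsingleton ⟨x.2, hx⟩ ⟨y.2, hy⟩)
  obtain ⟨posB, pageB, hlB, hB₀⟩ := hB.exists_isBookLayout_le (S := {v : B | v.1 ∈ A})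
    fun x hx y hy => Subtype.ext (hAB.inter_subsingleton ⟨hx, x.2⟩ ⟨hy, y.2⟩)
  obtain ⟨M, hM⟩ := (finite_range posA).bddAbove
  classical
  let r : V → B := fun u => if h : u ∈ B then ⟨u, h⟩ else ⟨b, hb⟩
  exact hasBookEmbedding_iff_exists_isBookLayout.mpr ⟨_, _, hAB.isBookLayout_gluePos hlA hlB hA₀
    hB₀ (M := M + 1) (fun u => Nat.lt_succ_of_le (hM ⟨u, rfl⟩)) (r := r) (fun u => dif_pos u.2)⟩

end Separation

section Nonseparable

variable {V W : Type} {G : SimpleGraph V} {H : SimpleGraph W}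

def SimpleGraph.Subgraph.deleteVertsTopIso (s : Set V) :
    ((⊤ : G.Subgraph).deleteVerts s).coe ≃g G.induce sᶜ where
  toEquiv := Equiv.subtypeEquivRight (by simp)
  map_rel_iff' := by simp +contextual

theorem isCutVertex_iff {v : V} : IsCutVertex G v ↔ ¬ (G.induce {v}ᶜ).Preconnected :=
  (Subgraph.deleteVertsTopIso {v}).preconnected_iff.not

def SimpleGraph.Iso.induceComplSingleton (e : G ≃g H) (v : V) :
    G.induce {v}ᶜ ≃g H.induce {e v}ᶜ where
  toEquiv := e.toEquiv.subtypeEquiv (by simp)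
  map_rel_iff' := by simp [e.map_adj_iff]

theorem IsNonseparable.of_iso (e : G ≃g H) (h : IsNonseparable G) : IsNonseparable H := by
  refine ⟨e.connected_iff.mp h.1, fun w hw => h.2 (e.symm w) ?_⟩
  rw [isCutVertex_iff] at hw ⊢
  exact (e.symm.induceComplSingleton w).preconnected_iff.not.mp hw

theorem exists_isSeparation_of_not_preconnected_induce_compl {S : Set V} (hS : S.Subsingleton)
    (h : ¬ (G.induce Sᶜ).Preconnected) :
    ∃ A B, IsSeparation G A B ∧ A ≠ univ ∧ B ≠ univ := by
  obtain ⟨a, b, hab⟩ : ∃ a b : (Sᶜ : Set V), ¬ (G.induce Sᶜ).Reachable a b := by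
    simpa [Preconnected] using h
  let R : Set V := {x | ∃ hx : x ∈ Sᶜ, (G.induce Sᶜ).Reachable a ⟨x, hx⟩}
  have hR (x y : (Sᶜ : Set V)) (hxy : G.Adj x y) : x.1 ∈ R ↔ y.1 ∈ R := by
    have : (G.induce Sᶜ).Reachable x y := Adj.reachable hxy
    exact ⟨fun ⟨_, h⟩ => ⟨y.2, h.trans this⟩, fun ⟨_, h⟩ => ⟨x.2, h.trans this.symm⟩⟩
  refine ⟨S ∪ R, S ∪ Rᶜ, ⟨?_, ?_, fun x y hxy => ?_⟩, ?_, ?_⟩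
  · rw [← union_union_distrib_left, union_compl_self, union_univ]
  · rw [← union_inter_distrib_left, inter_compl_self, union_empty]
    exact hS
  · simp only [mem_union, mem_compl_iff]
    by_cases hxS : x ∈ S
    · tauto
    by_cases hyS : y ∈ S
    · tauto
    have : x ∈ R ↔ y ∈ R := hR ⟨x, hxS⟩ ⟨y, hyS⟩ hxy
    tauto
  · refine ne_univ_iff_exists_notMem _ |>.mpr ⟨b, ?_⟩
    rintro (hbS | ⟨_, hb⟩)
    exacts [b.2 hbS, hab hb]
  · refine ne_univ_iff_exists_notMem _ |>.mpr ⟨a, ?_⟩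
    rintro (haS | haR)
    exacts [a.2 haS, haR ⟨a.2, Reachable.refl a⟩]

theorem exists_isSeparation_of_not_isNonseparable [Nonempty V] (h : ¬ IsNonseparable G) :
    ∃ A B, IsSeparation G A B ∧ A ≠ univ ∧ B ≠ univ := by
  by_cases hG : G.Preconnected
  · obtain ⟨v, hv⟩ : ∃ v, IsCutVertex G v := by
      simpa [IsNonseparable, connected_iff, hG] using h
    exact exists_isSeparation_of_not_preconnected_induce_compl subsingleton_singleton
      (isCutVertex_iff.mp hv)
  · refine exists_isSeparation_of_not_preconnected_induce_compl subsingleton_empty ?_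
    rwa [compl_empty, (induceUnivIso G).preconnected_iff]

end Nonseparable

theorem hasBookEmbedding_of_forall_isNonseparable {V : Type} [Finite V] (G : SimpleGraph V)
    {k : ℕ} (h : ∀ B : G.Subgraph, IsNonseparable B.coe → HasBookEmbedding B.coe k) :
    HasBookEmbedding G k := by
  induction hn : Nat.card V using Nat.strong_induction_on generalizing V with
  | _ n ih =>
  rcases isEmpty_or_nonempty V with hV | hV
  · exact hasBookEmbedding_of_isEmpty
  by_cases hG : IsNonseparable G
  · exact (h ⊤ (hG.of_iso Subgraph.topIso.symm)).of_isContained ⟨Subgraph.topIso.symm.toCopy⟩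
  obtain ⟨A, B, hAB, hA, hB⟩ := exists_isSeparation_of_not_isNonseparable hG
  have side (X : Set V) (hX : X ≠ univ) : HasBookEmbedding (G.induce X) k := by
    refine ih _ (hn ▸ Nat.card_coe_set_eq X ▸ ncard_lt_card hX) _ (fun C hC => ?_) rfl
    let e := (Copy.induce G X).isoSubgraphMap C
    exact (h _ (hC.of_iso e)).of_isContained ⟨e.toCopy⟩
  exact hAB.hasBookEmbedding (side A hA) (side B hB)

theorem IsNonseparable.exists_isBlock_ge {V : Type} [Finite V] {G : SimpleGraph V}
    {B : G.Subgraph} (hB : IsNonseparable B.coe) : ∃ C : G.Subgraph, B ≤ C ∧ C.IsBlock := by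
  obtain ⟨C, hBC, hC⟩ := (toFinite {C : G.Subgraph | IsNonseparable C.coe}).exists_le_maximal hB
  exact ⟨C, hBC, hC.prop, fun D hCD hD => le_antisymm (hC.2 hD hCD) hCD⟩

theorem bookThickness_eq_sSup_blocks_general {V : Type} [Fintype V] (G : SimpleGraph V) :
    bookThickness G =
      sSup {n : ℕ | ∃ B : G.Subgraph, B.IsBlock ∧ bookThickness B.coe = n} := by
  set S := {n : ℕ | ∃ B : G.Subgraph, B.IsBlock ∧ bookThickness B.coe = n}
  have upper : bookThickness G ∈ upperBounds S := by
    rintro _ ⟨B, -, rfl⟩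
    exact bookThickness_le_of_isContained B.coe_isContained
  refine le_antisymm (hasBookEmbedding_iff_bookThickness_le.mp <|
    hasBookEmbedding_of_forall_isNonseparable G fun B hB => ?_) (csSup_le' upper)
  obtain ⟨C, hBC, hC⟩ := hB.exists_isBlock_ge
  rw [hasBookEmbedding_iff_bookThickness_le]
  calc bookThickness B.coe ≤ bookThickness C.coe :=
        bookThickness_le_of_isContained (Subgraph.coe_isContained_coe hBC)
    _ ≤ sSup S := le_csSup ⟨_, upper⟩ ⟨C, hC, rfl⟩

/-- The book thickness of a finite connected graph equals the maximum of the
book thicknesses of its blocks. -/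
theorem bookThickness_eq_sSup_blocks {V : Type} [Fintype V] (G : SimpleGraph V)
    (hG : G.Connected) :
    bookThickness G =
      sSup {n : ℕ | ∃ B : G.Subgraph, B.IsBlock ∧ bookThickness B.coe = n} :=
  bookThickness_eq_sSup_blocks_general G
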